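/- Let n ≥ 3 and let (ℓ, r) be an ordered pair of nonempty permutations with |ℓ| + |r| = n − 1 such that s(ℓ) avoids 132 and 312 and s(r) avoids 132 and 312. Then there are exactly two permutations p of length n such that p = LnR (where n is the maximum entry of p), the subsequence L of entries preceding n is order-isomorphic to ℓ, the subsequence R of entries following n is order-isomorphic to r, and s(p) avoids both 132 and 312. -/

import Mathlib

/-!
Write `p = L n R`. Since `s(p) = s(L) s(R) n`, the condition on `s(p)` says that no entry of
`s(L) s(R)` lies between two earlier ones. Within `s(L)` and `s(R)` this is the hypothesis on `ℓ`
and `r`. Across the two blocks it forces the values of `L` to be an interval `c+1, …, c+|ℓ|`, which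
determines `p` from `c`, and it forces the first entry of `s(R)` to be adjacent to that interval.
That entry has rank `c₀` in `R`, where `c₀` is the first entry of `s(r)`, so `c = c₀` or
`c = c₀ - 1`; both values work.
-/

/-- The stack-sorting map `s`, implemented with a fuel parameter (the fuel
`l.length` always suffices, since the maximum of a nonempty list of naturals is
attained, so both recursive calls are on strictly shorter lists).
`s(ε) = ε` and `s(LmR) = s(L) s(R) m` where `m` is the maximum entry. -/
def stackSortAux : ℕ → List ℕ → List ℕ
  | 0, _ => []
  | _ + 1, [] => []
  | fuel + 1, a :: t =>
      let m := (a :: t).foldr max 0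
      stackSortAux fuel ((a :: t).takeWhile (fun x => x ≠ m)) ++
        stackSortAux fuel (((a :: t).dropWhile (fun x => x ≠ m)).tail) ++ [m]

/-- The stack-sorting map on finite sequences of (distinct) naturals. -/
def stackSort (l : List ℕ) : List ℕ := stackSortAux l.length l

/-- `l` is a permutation of `{1, 2, …, n}`, written in one-line notation. -/
def IsPermList (n : ℕ) (l : List ℕ) : Prop :=
  l.Perm ((List.range n).map (· + 1))

/-- The sequence `p` contains the pattern `q`: there is a strictly increasing choice
of positions of `p` on which the entries compare exactly as the entries of `q` do. -/
def ContainsPat (p q : List ℕ) : Prop :=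
  ∃ f : Fin q.length → Fin p.length, StrictMono f ∧
    ∀ i j : Fin q.length, q.get i < q.get j ↔ p.get (f i) < p.get (f j)

/-- The sequence `p` avoids the pattern `q`. -/
def AvoidsPat (p q : List ℕ) : Prop := ¬ ContainsPat p q

/-- Two sequences of distinct integers are order-isomorphic: same length, and
entries in corresponding positions compare the same way. -/
def OrderIsoList (u v : List ℕ) : Prop :=
  ∃ h : u.length = v.length,
    ∀ i j : Fin u.length,
      u.get i < u.get j ↔ v.get (Fin.cast h i) < v.get (Fin.cast h j)

theorem takeWhile_ne_append_cons_tail_dropWhile {x : ℕ} {l : List ℕ} (hx : x ∈ l) :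
    l.takeWhile (fun y => y ≠ x) ++ x :: (l.dropWhile (fun y => y ≠ x)).tail = l := by
  induction l with
  | nil => simp at hx
  | cons a t ih =>
    by_cases ha : a = x
    · subst ha
      simp
    · have ha' : decide (a ≠ x) = true := by simpa using ha
      rw [List.takeWhile_cons_of_pos (p := fun y => decide (y ≠ x)) ha',
        List.dropWhile_cons_of_pos (p := fun y => decide (y ≠ x)) ha', List.cons_append,
        ih (by simpa [Ne.symm ha] using hx)]

theorem foldr_max_mem {l : List ℕ} (hl : l ≠ []) : l.foldr max 0 ∈ l :=
  List.maximum_mem (List.foldr_max_of_ne_nil hl).symm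

theorem length_takeWhile_add_length_tail_dropWhile {x : ℕ} {l : List ℕ} (hx : x ∈ l) :
    (l.takeWhile (fun y => y ≠ x)).length + (l.dropWhile (fun y => y ≠ x)).tail.length + 1 =
      l.length := by
  conv_rhs => rw [← takeWhile_ne_append_cons_tail_dropWhile hx]
  simp only [List.length_append, List.length_cons]
  omega

theorem stackSortAux_succ {f : ℕ} {l : List ℕ} (hl : l.length ≤ f) :
    stackSortAux (f + 1) l = stackSortAux f l := by
  induction f generalizing l with
  | zero => rw [List.eq_nil_of_length_eq_zero (Nat.le_zero.1 hl)]; rfl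
  | succ f ih =>
    cases l with
    | nil => rfl
    | cons a t =>
      have hlen := length_takeWhile_add_length_tail_dropWhile (foldr_max_mem (List.cons_ne_nil a t))
      simp only [List.length_cons] at hl hlen
      simp only [stackSortAux]
      rw [ih (by omega), ih (by omega)]

theorem stackSortAux_eq_stackSort {f : ℕ} {l : List ℕ} (hl : l.length ≤ f) :
    stackSortAux f l = stackSort l :=
  Nat.le_induction rfl (fun _ hf ih => (stackSortAux_succ hf).trans ih) f hl

theorem stackSort_append_cons {L R : List ℕ} {m : ℕ} (hL : ∀ x ∈ L, x < m)
    (hR : ∀ x ∈ R, x ≤ m) : stackSort (L ++ m :: R) = stackSort L ++ stackSort R ++ [m] := by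
  have hmax : (L ++ m :: R).foldr max 0 = m := by
    refine le_antisymm (List.max_le_of_forall_le _ _ ?_) (List.le_max_of_le (by simp) le_rfl)
    simp only [List.mem_append, List.mem_cons]
    rintro x (hx | rfl | hx)
    exacts [(hL x hx).le, le_rfl, hR x hx]
  have hL' : ∀ x ∈ L, decide (x ≠ m) = true := fun x hx => by simpa using (hL x hx).ne
  obtain ⟨a, t, hat⟩ := List.exists_cons_of_ne_nil (List.append_ne_nil_of_right_ne_nil L
    (List.cons_ne_nil m R))
  have hlen : t.length = L.length + R.length := by
    have := congrArg List.length hat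
    simp only [List.length_append, List.length_cons] at this
    omega
  rw [stackSort, hat]
  simp only [List.length_cons, stackSortAux]
  rw [← hat, hmax, List.takeWhile_append_of_pos hL', List.dropWhile_append_of_pos hL']
  have hm : ¬decide (m ≠ m) = true := by simp
  rw [List.takeWhile_cons_of_neg (p := fun y => decide (y ≠ m)) hm,
    List.dropWhile_cons_of_neg (p := fun y => decide (y ≠ m)) hm, List.append_nil, List.tail_cons,
    stackSortAux_eq_stackSort (by omega), stackSortAux_eq_stackSort (by omega)]

theorem exists_eq_append_cons_max {l : List ℕ} (hl : l ≠ []) :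
    ∃ L m R, l = L ++ m :: R ∧ (∀ x ∈ L, x < m) ∧ ∀ x ∈ R, x ≤ m := by
  have hmax := foldr_max_mem hl
  have hle : ∀ x ∈ l, x ≤ l.foldr max 0 := fun x hx => List.le_max_of_le hx le_rfl
  refine ⟨_, _, _, (takeWhile_ne_append_cons_tail_dropWhile hmax).symm, fun x hx => ?_,
    fun x hx => hle x ?_⟩
  · exact lt_of_le_of_ne (hle x ((List.takeWhile_sublist _).subset hx))
      (by simpa using List.mem_takeWhile_imp hx)
  · exact (List.dropWhile_sublist _).subset ((List.tail_sublist _).subset hx)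

theorem stackSort_perm (l : List ℕ) : (stackSort l).Perm l := by
  induction h : l.length using Nat.strong_induction_on generalizing l with
  | _ k ih =>
    rcases eq_or_ne l [] with rfl | hl
    · rfl
    obtain ⟨L, m, R, rfl, hL, hR⟩ := exists_eq_append_cons_max hl
    simp only [List.length_append, List.length_cons] at h
    rw [stackSort_append_cons hL hR]
    refine (((ih _ (by omega) L rfl).append (ih _ (by omega) R rfl)).append_right [m]).trans ?_
    exact (List.perm_append_singleton _ _).trans List.perm_middle.symm

theorem stackSort_map {g : ℕ → ℕ} (hg : StrictMono g) (l : List ℕ) :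
    stackSort (l.map g) = (stackSort l).map g := by
  induction h : l.length using Nat.strong_induction_on generalizing l with
  | _ k ih =>
    rcases eq_or_ne l [] with rfl | hl
    · rfl
    obtain ⟨L, m, R, rfl, hL, hR⟩ := exists_eq_append_cons_max hl
    simp only [List.length_append, List.length_cons] at h
    have hL' : ∀ y ∈ L.map g, y < g m := by simpa using fun x hx => hg (hL x hx)
    have hR' : ∀ y ∈ R.map g, y ≤ g m := by simpa using fun x hx => hg.monotone (hR x hx)
    rw [List.map_append, List.map_cons, stackSort_append_cons hL' hR', stackSort_append_cons hL hR,
      ih _ (by omega) L rfl, ih _ (by omega) R rfl]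
    simp

theorem containsPat_iff_exists_sublist {p q : List ℕ} :
    ContainsPat p q ↔ ∃ u, u.Sublist p ∧ OrderIsoList q u := by
  constructor
  · rintro ⟨f, hf, hcmp⟩
    refine ⟨List.ofFn fun i => p.get (f i), ?_, List.length_ofFn.symm, fun i j => ?_⟩
    · exact List.sublist_iff_exists_fin_orderEmbedding_get_eq.2
        ⟨(Fin.castOrderIso List.length_ofFn).toOrderEmbedding.trans
          (OrderEmbedding.ofStrictMono f hf), fun i => by
            simp only [List.get_eq_getElem, List.getElem_ofFn]
            rfl⟩
    · simpa using hcmp i j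
  · rintro ⟨u, hu, hlen, hcmp⟩
    obtain ⟨f, hf⟩ := List.sublist_iff_exists_fin_orderEmbedding_get_eq.1 hu
    refine ⟨fun i => f (Fin.cast hlen i), f.strictMono.comp (Fin.cast_strictMono hlen),
      fun i j => ?_⟩
    simpa only [hf] using hcmp i j

theorem orderIsoList_132_iff {a b c : ℕ} : OrderIsoList [1, 3, 2] [a, b, c] ↔ a < c ∧ c < b := by
  simp [OrderIsoList, Fin.forall_fin_succ]
  omega

theorem orderIsoList_312_iff {a b c : ℕ} : OrderIsoList [3, 1, 2] [a, b, c] ↔ b < c ∧ c < a := by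
  simp [OrderIsoList, Fin.forall_fin_succ]
  omega

/-- For distinct entries: every entry is a left-to-right maximum or minimum. -/
def NoLateMiddle (w : List ℕ) : Prop :=
  ∀ a b c : ℕ, [a, b, c].Sublist w → ¬(min a b < c ∧ c < max a b)

theorem noLateMiddle_iff_avoidsPat {w : List ℕ} :
    NoLateMiddle w ↔ AvoidsPat w [1, 3, 2] ∧ AvoidsPat w [3, 1, 2] := by
  simp only [AvoidsPat, containsPat_iff_exists_sublist, not_exists, not_and]
  constructor
  · intro h
    refine ⟨fun u hu hiso => ?_, fun u hu hiso => ?_⟩ <;>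
      obtain ⟨a, b, c, rfl⟩ := List.length_eq_three.1 hiso.1.symm
    · exact h a b c hu (by rw [orderIsoList_132_iff] at hiso; omega)
    · exact h a b c hu (by rw [orderIsoList_312_iff] at hiso; omega)
  · rintro ⟨h132, h312⟩ a b c hs hmid
    rcases lt_or_gt_of_ne (show a ≠ b by omega) with hab | hab
    · exact h132 _ hs (orderIsoList_132_iff.2 (by omega))
    · exact h312 _ hs (orderIsoList_312_iff.2 (by omega))

theorem NoLateMiddle.map {g : ℕ → ℕ} (hg : StrictMono g) {l : List ℕ} (h : NoLateMiddle l) :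
    NoLateMiddle (l.map g) := by
  intro a b c hs
  obtain ⟨l', hl', hmap⟩ := List.sublist_map_iff.1 hs
  obtain ⟨a', b', c', rfl⟩ :=
    List.length_eq_three.1 (by simpa using (congrArg List.length hmap).symm)
  simp only [List.map_cons, List.map_nil, List.cons.injEq, and_true] at hmap
  obtain ⟨rfl, rfl, rfl⟩ := hmap
  rw [← hg.monotone.map_min, ← hg.monotone.map_max, hg.lt_iff_lt, hg.lt_iff_lt]
  exact h a' b' c' hl'

theorem NoLateMiddle.append_singleton {w : List ℕ} {m : ℕ} (h : NoLateMiddle w)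
    (hm : ∀ x ∈ w, x ≤ m) : NoLateMiddle (w ++ [m]) := by
  intro a b c hs hmid
  obtain ⟨l₁, l₂, heq, h₁, h₂⟩ := List.sublist_append_iff.1 hs
  rcases List.sublist_singleton.1 h₂ with rfl | rfl
  · exact h a b c (by simpa [heq] using h₁) hmid
  · obtain ⟨rfl, hmc⟩ := List.append_inj' (show l₁ ++ [m] = [a, b] ++ [c] from heq.symm) rfl
    obtain rfl := List.singleton_inj.1 hmc
    have := hm a (h₁.subset (by simp))
    have := hm b (h₁.subset (by simp))
    omega

theorem NoLateMiddle.append_cons {u v : List ℕ} {v₀ lo hi : ℕ} (hu : NoLateMiddle u)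
    (hv : NoLateMiddle (v₀ :: v)) (hv₀ : v₀ ∉ v) (hu_mem : ∀ x ∈ u, lo < x ∧ x < hi)
    (hv_mem : ∀ y ∈ v₀ :: v, y ≤ lo ∨ hi ≤ y) (hv₀_eq : v₀ = lo ∨ v₀ = hi) :
    NoLateMiddle (u ++ v₀ :: v) := by
  intro a b c hs hmid
  obtain ⟨l₁, l₂, heq, h₁, h₂⟩ := List.sublist_append_iff.1 hs
  have hmem₁ : ∀ x ∈ l₁, lo < x ∧ x < hi := fun x hx => hu_mem x (h₁.subset hx)
  have hmem₂ : ∀ y ∈ l₂, y ≤ lo ∨ hi ≤ y := fun y hy => hv_mem y (h₂.subset hy)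
  rcases l₁ with _ | ⟨x, _ | ⟨y, _ | ⟨z, _ | ⟨w, l₁⟩⟩⟩⟩ <;>
    simp only [List.nil_append, List.cons_append, List.cons.injEq] at heq
  · exact hv a b c (heq ▸ h₂) hmid
  · obtain ⟨rfl, rfl⟩ := heq
    have ha := hmem₁ a (by simp)
    have hc := hmem₂ c (by simp)
    rcases List.sublist_cons_iff.1 h₂ with hbc | ⟨_, hbc, -⟩
    · have hcv₀ : c ≠ v₀ := fun hcv => hv₀ (hcv ▸ hbc.subset (by simp))
      have := hv v₀ b c (hbc.cons_cons v₀)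
      have := hmem₂ b (by simp)
      omega
    · obtain ⟨rfl, rfl⟩ := List.cons.inj hbc
      omega
  · obtain ⟨rfl, rfl, rfl⟩ := heq
    have := hmem₁ a (by simp)
    have := hmem₁ b (by simp)
    have := hmem₂ c (by simp)
    omega
  · obtain ⟨rfl, rfl, rfl, -⟩ := heq
    exact hu a b c h₁ hmid
  · simp at heq

theorem NoLateMiddle.not_between_of_mem_append {u v : List ℕ} (h : NoLateMiddle (u ++ v))
    {x z y : ℕ} (hx : x ∈ u) (hz : z ∈ u) (hy : y ∈ v) : ¬(min x z < y ∧ y < max x z) := by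
  intro hmid
  obtain ⟨s, t, rfl⟩ := List.append_of_mem hx
  have hy' : [y].Sublist v := List.singleton_sublist.2 hy
  rw [List.mem_append, List.mem_cons] at hz
  rcases hz with hz | rfl | hz
  · refine h z x y ?_ (by omega)
    exact ((List.singleton_sublist.2 hz).append
      (List.singleton_sublist.2 List.mem_cons_self)).append hy'
  · omega
  · refine h x z y ?_ hmid
    exact (((List.singleton_sublist.2 hz).cons_cons x).trans
      (List.sublist_append_right s (x :: t))).append hy'

theorem IsPermList.mem_iff {m : ℕ} {l : List ℕ} (h : IsPermList m l) {x : ℕ} :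
    x ∈ l ↔ 1 ≤ x ∧ x ≤ m := by
  rw [List.Perm.mem_iff h, List.mem_map]
  simp only [List.mem_range]
  exact ⟨by rintro ⟨y, hy, rfl⟩; omega, fun hx => ⟨x - 1, by omega, by omega⟩⟩

theorem IsPermList.nodup {m : ℕ} {l : List ℕ} (h : IsPermList m l) : l.Nodup :=
  h.nodup_iff.2 (List.nodup_range.map (add_left_injective 1))

theorem isPermList_of_nodup {m : ℕ} {l : List ℕ} (hl : l.Nodup) (hlen : l.length = m)
    (hmem : ∀ x ∈ l, 1 ≤ x ∧ x ≤ m) : IsPermList m l := by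
  refine (hl.subperm fun x hx => ?_).perm_of_length_le (by simp [hlen])
  obtain ⟨h1, h2⟩ := hmem x hx
  exact List.mem_map.2 ⟨x - 1, List.mem_range.2 (by omega), by omega⟩

theorem IsPermList.countP_le {m : ℕ} {l : List ℕ} (h : IsPermList m l) {x : ℕ} (hx : x ≤ m) :
    l.countP (· ≤ x) = x := by
  suffices ∀ k, ((List.range k).map (· + 1)).countP (· ≤ x) = min x k by
    rw [h.countP_eq, this, min_eq_left hx]
  intro k
  induction k with
  | zero => simp
  | succ k ih =>
    rw [List.range_succ, List.map_append, List.countP_append, ih, List.map_singleton,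
      List.countP_singleton]
    simp only [decide_eq_true_eq]
    split_ifs <;> omega

theorem orderIsoList_map {g : ℕ → ℕ} (hg : StrictMono g) (l : List ℕ) :
    OrderIsoList (l.map g) l :=
  ⟨List.length_map g, fun i j => by simpa using hg.lt_iff_lt⟩

theorem countP_eq_countP_of_getElem {u v : List ℕ} {p q : ℕ → Bool} (hlen : u.length = v.length)
    (h : ∀ i (hi : i < u.length), p u[i] = q (v[i]'(hlen ▸ hi))) : u.countP p = v.countP q := by
  induction u generalizing v with
  | nil => rw [List.eq_nil_of_length_eq_zero hlen.symm]; rfl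
  | cons a u ih =>
    obtain ⟨b, v, rfl⟩ := List.exists_cons_of_length_eq_add_one hlen.symm
    rw [List.countP_cons, List.countP_cons, show p a = q b from h 0 (by simp)]
    congr 1
    exact ih (by simpa using hlen) fun i hi => h (i + 1) (by simpa using hi)

theorem OrderIsoList.countP_le_getElem {u v : List ℕ} (h : OrderIsoList u v) {i : ℕ}
    (hi : i < u.length) : u.countP (· ≤ u[i]) = v.countP (· ≤ v[i]'(h.1 ▸ hi)) := by
  obtain ⟨hlen, hcmp⟩ := h
  refine countP_eq_countP_of_getElem hlen fun j hj => ?_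
  simpa [not_lt] using (hcmp ⟨i, hi⟩ ⟨j, hj⟩).not

theorem OrderIsoList.eq_map {u v : List ℕ} (h : OrderIsoList u v) (hv : IsPermList v.length v)
    {g : ℕ → ℕ} (hg : ∀ x ∈ u, g (u.countP (· ≤ x)) = x) : u = v.map g := by
  refine List.ext_getElem (by simp [h.1]) fun i hu _ => ?_
  rw [← hg _ (List.getElem_mem hu), h.countP_le_getElem hu,
    hv.countP_le (hv.mem_iff.1 (List.getElem_mem _)).2]
  simp

theorem countP_le_lt_countP_le {l : List ℕ} {x y : ℕ} (hy : y ∈ l) (hxy : x < y) :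
    l.countP (· ≤ x) < l.countP (· ≤ y) := by
  induction l with
  | nil => simp at hy
  | cons a t ih =>
    have hmono : t.countP (· ≤ x) ≤ t.countP (· ≤ y) :=
      List.countP_mono_left fun z _ h => by simp only [decide_eq_true_eq] at h ⊢; omega
    simp only [List.countP_cons, decide_eq_true_eq]
    rcases List.mem_cons.1 hy with rfl | hy
    · split_ifs <;> omega
    · have := ih hy
      split_ifs <;> omega

theorem IsPermList.stackSort {m : ℕ} {l : List ℕ} (h : IsPermList m l) :
    IsPermList m (stackSort l) :=
  (stackSort_perm l).trans h

def shiftAbove (c a y : ℕ) : ℕ := if y ≤ c then y else y + a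

theorem shiftAbove_strictMono (c a : ℕ) : StrictMono (shiftAbove c a) := by
  intro y z hyz
  unfold shiftAbove
  split_ifs <;> omega

theorem IsPermList.mem_map_add {a c x : ℕ} {l : List ℕ} (h : IsPermList a l)
    (hx : x ∈ l.map (· + c)) : c < x ∧ x ≤ c + a := by
  obtain ⟨z, hz, rfl⟩ := List.mem_map.1 hx
  have := h.mem_iff.1 hz
  omega

theorem IsPermList.mem_map_shiftAbove {a b c y : ℕ} {l : List ℕ} (h : IsPermList b l)
    (hy : y ∈ l.map (shiftAbove c a)) : (y ≤ c ∨ c + a < y) ∧ 1 ≤ y ∧ y ≤ a + b := by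
  obtain ⟨z, hz, rfl⟩ := List.mem_map.1 hy
  have := h.mem_iff.1 hz
  unfold shiftAbove
  split_ifs <;> omega

def extension (n c : ℕ) (ℓ r : List ℕ) : List ℕ :=
  ℓ.map (· + c) ++ n :: r.map (shiftAbove c ℓ.length)

section Extension

variable {n c : ℕ} {ℓ r : List ℕ}

theorem isPermList_extension (hℓ : IsPermList ℓ.length ℓ) (hr : IsPermList r.length r)
    (hc : c ≤ r.length) (hn : n = ℓ.length + r.length + 1) :
    IsPermList n (extension n c ℓ r) := by
  refine isPermList_of_nodup ?_ ?_ ?_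
  · refine List.nodup_append.2 ⟨hℓ.nodup.map (add_left_injective c), List.nodup_cons.2
      ⟨fun hn' => ?_, hr.nodup.map (shiftAbove_strictMono _ _).injective⟩, ?_⟩
    · have := hr.mem_map_shiftAbove hn'
      omega
    · rintro x hx y hy rfl
      have := hℓ.mem_map_add hx
      rcases List.mem_cons.1 hy with rfl | hy
      · omega
      · have := hr.mem_map_shiftAbove hy
        omega
  · simp only [extension, List.length_append, List.length_map, List.length_cons]
    omega
  · simp only [extension, List.mem_append, List.mem_cons]
    rintro x (hx | rfl | hx)
    · have := hℓ.mem_map_add hx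
      omega
    · omega
    · have := hr.mem_map_shiftAbove hx
      omega

theorem stackSort_extension (hℓ : IsPermList ℓ.length ℓ) (hr : IsPermList r.length r)
    (hc : c ≤ r.length) (hn : n = ℓ.length + r.length + 1) :
    stackSort (extension n c ℓ r) =
      (stackSort ℓ).map (· + c) ++ (stackSort r).map (shiftAbove c ℓ.length) ++ [n] := by
  have hL : ∀ x ∈ ℓ.map (· + c), x < n := fun x hx => by
    have := hℓ.mem_map_add hx
    omega
  have hR : ∀ y ∈ r.map (shiftAbove c ℓ.length), y ≤ n := fun y hy => by
    have := hr.mem_map_shiftAbove hy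
    omega
  rw [extension, stackSort_append_cons hL hR, stackSort_map add_left_strictMono,
    stackSort_map (shiftAbove_strictMono _ _)]

variable {c₀ : ℕ} {t : List ℕ}

theorem noLateMiddle_stackSort_extension (hℓ : IsPermList ℓ.length ℓ)
    (hr : IsPermList r.length r) (hn : n = ℓ.length + r.length + 1)
    (hℓs : NoLateMiddle (stackSort ℓ)) (hrs : NoLateMiddle (stackSort r))
    (hc₀ : stackSort r = c₀ :: t) (hc : c + 1 = c₀ ∨ c = c₀) :
    NoLateMiddle (stackSort (extension n c ℓ r)) := by
  have hrs' := hr.stackSort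
  have hc₀r := hrs'.mem_iff.1 (hc₀ ▸ List.mem_cons_self)
  have hrs_map := hrs.map (shiftAbove_strictMono c ℓ.length)
  rw [stackSort_extension hℓ hr (by omega) hn]
  refine NoLateMiddle.append_singleton ?_ fun x hx => ?_
  · rw [hc₀, List.map_cons] at hrs_map ⊢
    refine (hℓs.map add_left_strictMono).append_cons (lo := c) (hi := c + ℓ.length + 1)
      hrs_map ?_ (fun x hx => ?_) (fun y hy => ?_) ?_
    · rw [List.mem_map_of_injective (shiftAbove_strictMono _ _).injective]
      exact (List.nodup_cons.1 (hc₀ ▸ hrs'.nodup)).1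
    · have := hℓ.stackSort.mem_map_add hx
      omega
    · have := hrs'.mem_map_shiftAbove (by rwa [hc₀, List.map_cons])
      omega
    · unfold shiftAbove
      split_ifs <;> omega
  · rcases List.mem_append.1 hx with hx | hx
    · have := hℓ.stackSort.mem_map_add hx
      omega
    · have := hrs'.mem_map_shiftAbove hx
      omega

theorem succ_eq_or_eq_of_noLateMiddle_stackSort_extension (hℓ : IsPermList ℓ.length ℓ)
    (hr : IsPermList r.length r) (hℓ_ne : ℓ ≠ []) (hc : c ≤ r.length)
    (hn : n = ℓ.length + r.length + 1) (hc₀ : stackSort r = c₀ :: t)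
    (h : NoLateMiddle (stackSort (extension n c ℓ r))) : c + 1 = c₀ ∨ c = c₀ := by
  rw [stackSort_extension hℓ hr hc hn, hc₀, List.map_cons] at h
  obtain ⟨x, hx⟩ := List.exists_mem_of_ne_nil ℓ hℓ_ne
  have hxc : x + c ∈ (stackSort ℓ).map (· + c) :=
    List.mem_map_of_mem ((stackSort_perm ℓ).mem_iff.2 hx)
  have hx' := hℓ.mem_iff.1 hx
  have hc₀r := hr.stackSort.mem_iff.1 (hc₀ ▸ List.mem_cons_self)
  have hmid : ∀ y, 1 ≤ y → y ≤ r.length → y ≠ c₀ →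
      ¬(min (x + c) (shiftAbove c ℓ.length c₀) < shiftAbove c ℓ.length y ∧
        shiftAbove c ℓ.length y < max (x + c) (shiftAbove c ℓ.length c₀)) := by
    intro y hy₁ hy₂ hyc₀
    have hyt : y ∈ t := by
      have := hr.stackSort.mem_iff.2 ⟨hy₁, hy₂⟩
      rw [hc₀] at this
      exact (List.mem_cons.1 this).resolve_left hyc₀
    refine h _ _ _ (List.Sublist.trans ?_ (List.sublist_append_left _ [n]))
    exact (List.singleton_sublist.2 hxc).append
      ((List.singleton_sublist.2 (List.mem_map_of_mem hyt)).cons_cons _)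
  -- Otherwise the entry `c`, resp. `c + 1`, of `r` lands between an entry of `L` and the first
  -- entry of `s(R)`.
  by_contra hne
  rcases lt_or_gt_of_ne (show c₀ ≠ c by omega) with hlt | hgt
  · have := hmid c (by omega) hc (by omega)
    unfold shiftAbove at this
    split_ifs at this <;> omega
  · have := hmid (c + 1) (by omega) (by omega) (by omega)
    unfold shiftAbove at this
    split_ifs at this <;> omega

end Extension

section Decomposition

variable {n : ℕ} {ℓ r L R : List ℕ}

theorem IsPermList.lt_of_mem_append (hp : IsPermList n (L ++ n :: R)) {x : ℕ}
    (hx : x ∈ L ++ R) : x < n := by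
  have hx' : x ∈ L ++ n :: R := by
    simp only [List.mem_append, List.mem_cons] at hx ⊢
    tauto
  refine lt_of_le_of_ne (hp.mem_iff.1 hx').2 ?_
  rintro rfl
  exact (List.nodup_cons.1 (List.nodup_middle.1 hp.nodup)).1 hx

theorem exists_eq_extension (hℓ : IsPermList ℓ.length ℓ) (hr : IsPermList r.length r)
    (hℓ_ne : ℓ ≠ []) (hp : IsPermList n (L ++ n :: R)) (hL : OrderIsoList L ℓ)
    (hR : OrderIsoList R r) (hconv : ∀ x ∈ L, ∀ z ∈ L, ∀ y ∈ R, ¬(min x z < y ∧ y < max x z)) :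
    ∃ c ≤ r.length, L ++ n :: R = extension n c ℓ r := by
  obtain ⟨x₀, hx₀⟩ :=
    List.exists_mem_of_ne_nil L (by simpa [← List.length_pos_iff, hL.1] using hℓ_ne)
  obtain ⟨-, -, hdisj⟩ := List.nodup_append.1 (List.nodup_cons.1 (List.nodup_middle.1 hp.nodup)).2
  have hrank : ∀ x ∈ L ++ R, L.countP (· ≤ x) + R.countP (· ≤ x) = x := fun x hx => by
    have hxn := hp.lt_of_mem_append hx
    simpa [List.countP_append, List.countP_cons, hxn.not_ge] using hp.countP_le hxn.le
  have hside : ∀ x ∈ L, ∀ y ∈ R, x < y ↔ x₀ < y := fun x hx y hy => by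
    have := hconv x hx x₀ hx₀ y hy
    have := hdisj x hx y hy
    have := hdisj x₀ hx₀ y hy
    omega
  -- By `hside`, all entries of `L` have the same rank `c` in `R`.
  set c := R.countP (· ≤ x₀)
  refine ⟨c, List.countP_le_length.trans hR.1.le, ?_⟩
  have hL_eq : L = ℓ.map (· + c) := hL.eq_map hℓ fun x hx => by
    have hc : R.countP (· ≤ x) = c := List.countP_congr fun y hy => by
      simpa only [decide_eq_true_eq, not_lt] using (hside x hx y hy).not
    have := hrank x (List.mem_append_left R hx)
    omega
  have hR_eq : R = r.map (shiftAbove c ℓ.length) := hR.eq_map hr fun y hy => by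
    have hy_rank := hrank y (List.mem_append_right L hy)
    rcases lt_or_gt_of_ne (hdisj x₀ hx₀ y hy) with hx₀y | hyx₀
    · have hLy : L.countP (· ≤ y) = ℓ.length := hL.1 ▸ List.countP_eq_length.2 fun x hx => by
        simpa only [decide_eq_true_eq] using ((hside x hx y hy).2 hx₀y).le
      have := countP_le_lt_countP_le hy hx₀y
      rw [shiftAbove, if_neg (by omega)]
      omega
    · have hLy : L.countP (· ≤ y) = 0 := List.countP_eq_zero.2 fun x hx => by
        have := hside x hx y hy
        have := hdisj x hx y hy
        simp only [decide_eq_true_eq]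
        omega
      have : R.countP (· ≤ y) ≤ c :=
        List.countP_mono_left fun z _ hz => by simp only [decide_eq_true_eq] at hz ⊢; omega
      rw [shiftAbove, if_pos this]
      omega
  rw [extension, ← hL_eq, ← hR_eq]

theorem exists_eq_extension_of_noLateMiddle (hℓ : IsPermList ℓ.length ℓ)
    (hr : IsPermList r.length r) (hℓ_ne : ℓ ≠ []) (hp : IsPermList n (L ++ n :: R))
    (hL : OrderIsoList L ℓ) (hR : OrderIsoList R r) (h : NoLateMiddle (stackSort (L ++ n :: R))) :
    ∃ c ≤ r.length, L ++ n :: R = extension n c ℓ r := by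
  refine exists_eq_extension hℓ hr hℓ_ne hp hL hR fun x hx z hz y hy => ?_
  rw [stackSort_append_cons (fun x hx => hp.lt_of_mem_append (List.mem_append_left R hx))
    (fun y hy => (hp.lt_of_mem_append (List.mem_append_right L hy)).le), List.append_assoc] at h
  exact h.not_between_of_mem_append ((stackSort_perm L).mem_iff.2 hx)
    ((stackSort_perm L).mem_iff.2 hz) (List.mem_append_left _ ((stackSort_perm R).mem_iff.2 hy))

end Decomposition

theorem mem_extensions_iff {n c₀ : ℕ} {ℓ r t : List ℕ} (hℓ : IsPermList ℓ.length ℓ)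
    (hr : IsPermList r.length r) (hℓ_ne : ℓ ≠ []) (hn : n = ℓ.length + r.length + 1)
    (hℓs : NoLateMiddle (stackSort ℓ)) (hrs : NoLateMiddle (stackSort r))
    (hc₀ : stackSort r = c₀ :: t) (p : List ℕ) :
    (IsPermList n p ∧ ∃ L R : List ℕ, p = L ++ n :: R ∧ OrderIsoList L ℓ ∧ OrderIsoList R r ∧
        AvoidsPat (stackSort p) [1, 3, 2] ∧ AvoidsPat (stackSort p) [3, 1, 2]) ↔
      p = extension n (c₀ - 1) ℓ r ∨ p = extension n c₀ ℓ r := by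
  have hc₀r := hr.stackSort.mem_iff.1 (hc₀ ▸ List.mem_cons_self)
  simp only [← noLateMiddle_iff_avoidsPat]
  constructor
  · rintro ⟨hp, L, R, rfl, hL, hR, hav⟩
    obtain ⟨c, hc, hext⟩ := exists_eq_extension_of_noLateMiddle hℓ hr hℓ_ne hp hL hR hav
    rw [hext] at hav ⊢
    rcases succ_eq_or_eq_of_noLateMiddle_stackSort_extension hℓ hr hℓ_ne hc hn hc₀ hav
      with rfl | rfl
    exacts [Or.inl rfl, Or.inr rfl]
  · have hmem : ∀ c, c + 1 = c₀ ∨ c = c₀ → IsPermList n (extension n c ℓ r) ∧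
        ∃ L R : List ℕ, extension n c ℓ r = L ++ n :: R ∧ OrderIsoList L ℓ ∧
          OrderIsoList R r ∧ NoLateMiddle (stackSort (extension n c ℓ r)) := fun c hc =>
      ⟨isPermList_extension hℓ hr (by omega) hn, _, _, rfl,
        orderIsoList_map add_left_strictMono ℓ, orderIsoList_map (shiftAbove_strictMono _ _) r,
        noLateMiddle_stackSort_extension hℓ hr hn hℓs hrs hc₀ hc⟩
    rintro (rfl | rfl)
    exacts [hmem _ (by omega), hmem _ (Or.inr rfl)]

theorem two_extensions_av132_312_general (n : ℕ) (ℓ r : List ℕ)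
    (hℓperm : IsPermList ℓ.length ℓ) (hrperm : IsPermList r.length r)
    (hℓ : ℓ ≠ []) (hr : r ≠ []) (hlen : ℓ.length + r.length = n - 1)
    (hℓav : AvoidsPat (stackSort ℓ) [1, 3, 2] ∧ AvoidsPat (stackSort ℓ) [3, 1, 2])
    (hrav : AvoidsPat (stackSort r) [1, 3, 2] ∧ AvoidsPat (stackSort r) [3, 1, 2]) :
    Nat.card {p : List ℕ // IsPermList n p ∧
        ∃ L R : List ℕ, p = L ++ n :: R ∧ OrderIsoList L ℓ ∧ OrderIsoList R r ∧
          AvoidsPat (stackSort p) [1, 3, 2] ∧ AvoidsPat (stackSort p) [3, 1, 2]} = 2 := by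
  have hn : n = ℓ.length + r.length + 1 := by
    have := List.length_pos_iff.2 hℓ
    omega
  obtain ⟨c₀, t, hc₀⟩ := List.exists_cons_of_ne_nil fun h =>
    hr (h ▸ stackSort_perm r : [].Perm r).nil_eq.symm
  have hc₀_pos : 1 ≤ c₀ := (hrperm.stackSort.mem_iff.1 (hc₀ ▸ List.mem_cons_self)).1
  have hne : extension n (c₀ - 1) ℓ r ≠ extension n c₀ ℓ r := by
    obtain ⟨x, ℓ', rfl⟩ := List.exists_cons_of_ne_nil hℓ
    simp only [extension, List.map_cons, List.cons_append, ne_eq, List.cons.injEq, not_and]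
    omega
  rw [Nat.card_congr (Equiv.subtypeEquivRight (mem_extensions_iff hℓperm hrperm hℓ hn
    (noLateMiddle_iff_avoidsPat.2 hℓav) (noLateMiddle_iff_avoidsPat.2 hrav) hc₀))]
  exact (Nat.card_coe_set_eq {extension n (c₀ - 1) ℓ r, extension n c₀ ℓ r}).trans
    (Set.ncard_pair hne)

/-- let `n ≥ 3` and let `(ℓ, r)` be an ordered pair of nonempty
permutations with `|ℓ| + |r| = n - 1` such that `s(ℓ)` and `s(r)` avoid `132` and
`312`. Then there are exactly two permutations `p` of length `n` of the form
`p = L n R` with `L` order-isomorphic to `ℓ`, `R` order-isomorphic to `r`, and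
`s(p)` avoiding both `132` and `312`. -/
theorem two_extensions_av132_312 (n : ℕ) (hn : 3 ≤ n) (ℓ r : List ℕ)
    (hℓperm : IsPermList ℓ.length ℓ) (hrperm : IsPermList r.length r)
    (hℓ : ℓ ≠ []) (hr : r ≠ []) (hlen : ℓ.length + r.length = n - 1)
    (hℓav : AvoidsPat (stackSort ℓ) [1, 3, 2] ∧ AvoidsPat (stackSort ℓ) [3, 1, 2])
    (hrav : AvoidsPat (stackSort r) [1, 3, 2] ∧ AvoidsPat (stackSort r) [3, 1, 2]) :
    Nat.card {p : List ℕ // IsPermList n p ∧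
        ∃ L R : List ℕ, p = L ++ n :: R ∧ OrderIsoList L ℓ ∧ OrderIsoList R r ∧
          AvoidsPat (stackSort p) [1, 3, 2] ∧ AvoidsPat (stackSort p) [3, 1, 2]} = 2 :=
  two_extensions_av132_312_general n ℓ r hℓperm hrperm hℓ hr hlen hℓav hrav
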